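/- arXiv:2204.00469 — 3 statements merged into one kernel-verified Lean document; each statement's English description precedes it below -/
import Mathlib

section
/- Let $P$ be a real polynomial of degree at most $n$. Then the supremum norm of $P$ on $[-1,1]$ is bounded by $(n+1)^2$ times the $L^1$ norm of $P$ on $[-1,1]$, i.e., $\max_{x\in[-1,1]}|P(x)| \le (n+1)^2 \int_{-1}^1 |P(x)|\,dx$. -/
open Polynomial intervalIntegral



noncomputable def uu (k : ℕ) : ℝ[X] := (X ^ 2 - 1) ^ k
noncomputable def Rod (k : ℕ) : ℝ[X] := derivative^[k] (uu k)

lemma uu_eq (k : ℕ) : uu k = (X - C 1) ^ k * (X + C 1) ^ k := by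
  rw [uu, ← mul_pow, C_1]; ring_nf

lemma eval_iter_deriv_zero (c : ℝ) (k j : ℕ) (hj : j < k) (v : ℝ[X]) :
    (derivative^[j] ((X - C c) ^ k * v)).eval c = 0 := by
  rw [Polynomial.iterate_derivative_mul, eval_finset_sum]
  refine Finset.sum_eq_zero fun i hi => ?_
  rw [iterate_derivative_X_sub_pow]
  have h1 : k - (j - i) ≠ 0 := by omega
  simp [h1, zero_pow h1]

lemma eval_uu_deriv_one (k j : ℕ) (hj : j < k) : (derivative^[j] (uu k)).eval 1 = 0 := by
  rw [uu_eq]; exact eval_iter_deriv_zero 1 k j hj _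

lemma eval_uu_deriv_neg_one (k j : ℕ) (hj : j < k) : (derivative^[j] (uu k)).eval (-1) = 0 := by
  have : uu k = (X - C (-1:ℝ)) ^ k * (X - C 1) ^ k := by
    rw [uu, ← mul_pow, C_1, map_neg, C_1]; ring_nf
  rw [this]; exact eval_iter_deriv_zero (-1) k j hj _

lemma Rod_eval_one (k : ℕ) : (Rod k).eval 1 = 2 ^ k * k.factorial := by
  rw [Rod, uu_eq, Polynomial.iterate_derivative_mul, eval_finset_sum]
  rw [Finset.sum_eq_single 0]
  · rw [Nat.sub_zero, iterate_derivative_X_sub_pow_self, Function.iterate_zero_apply]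
    norm_num [mul_comm]
  · intro i hi hi0
    rw [iterate_derivative_X_sub_pow]
    have h1 : k - (k - i) ≠ 0 := by
      simp only [Finset.mem_range] at hi; omega
    simp [h1, zero_pow h1]
  · simp

lemma Rod_eval_neg_one (k : ℕ) : (Rod k).eval (-1) = (-2) ^ k * k.factorial := by
  rw [Rod, uu_eq, Polynomial.iterate_derivative_mul, eval_finset_sum]
  rw [Finset.sum_eq_single k]
  · have : derivative^[k] ((X + C (1:ℝ)) ^ k) = k.factorial := by
      rw [iterate_derivative_X_add_pow, Nat.sub_self, pow_zero, nsmul_one,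
        Nat.descFactorial_self]
    rw [Nat.sub_self, Function.iterate_zero_apply, this]
    norm_num [mul_comm]
  · intro i hi hik
    rw [iterate_derivative_X_add_pow]
    have h1 : k - i ≠ 0 := by simp only [Finset.mem_range] at hi; omega
    simp [h1, zero_pow h1]
  · simp


lemma deriv_sq_sub_one : derivative ((X:ℝ[X]) ^ 2 - 1) = 2 * X := by
  simp [derivative_X_pow, map_ofNat]; norm_num

lemma base_ode (k : ℕ) : (X ^ 2 - 1) * derivative (uu k) = 2 * (k : ℝ[X]) * X * uu k := by
  cases k with
  | zero => simp [uu]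
  | succ m =>
    rw [uu, derivative_pow, deriv_sq_sub_one, C_eq_natCast, Nat.add_sub_cancel]
    push_cast
    ring

lemma iterA (p : ℝ[X]) (m : ℕ) : derivative^[m+1] (X * p) =
    X * derivative^[m+1] p + ((m : ℝ[X]) + 1) * derivative^[m] p := by
  induction m with
  | zero => simp [derivative_mul]; ring
  | succ m ih =>
    rw [show m + 1 + 1 = (m+1) + 1 from rfl, Function.iterate_succ_apply', ih]
    simp only [derivative_add, derivative_mul, derivative_X, derivative_one,
      derivative_natCast, derivative_ofNat]
    rw [← Function.iterate_succ_apply' derivative (m+1), ← Function.iterate_succ_apply' derivative m]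
    push_cast
    ring

lemma iterB (p : ℝ[X]) (m : ℕ) : derivative^[m+1] ((X ^ 2 - 1) * derivative p) =
    (X ^ 2 - 1) * derivative^[m+2] p + 2 * ((m : ℝ[X]) + 1) * X * derivative^[m+1] p
      + ((m : ℝ[X]) + 1) * (m : ℝ[X]) * derivative^[m] p := by
  induction m with
  | zero =>
    simp only [zero_add, Function.iterate_one, Function.iterate_zero_apply, Nat.cast_zero]
    rw [derivative_mul, deriv_sq_sub_one]
    have h2 : derivative^[2] p = derivative (derivative p) := rfl
    rw [h2]
    ring
  | succ m ih =>
    rw [show m + 1 + 1 = (m+1) + 1 from rfl, Function.iterate_succ_apply', ih]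
    simp only [derivative_add, derivative_mul, derivative_X, derivative_one,
      derivative_natCast, derivative_ofNat, deriv_sq_sub_one]
    rw [← Function.iterate_succ_apply' derivative (m+2),
      ← Function.iterate_succ_apply' derivative (m+1),
      ← Function.iterate_succ_apply' derivative m]
    push_cast
    ring

lemma rod_ode (k : ℕ) :
    (X ^ 2 - 1) * derivative (derivative (Rod k)) + 2 * X * derivative (Rod k)
      = (k : ℝ[X]) * ((k : ℝ[X]) + 1) * Rod k := by
  have h1 := congrArg (derivative^[k+1]) (base_ode k)
  have h2 : (2 : ℝ[X]) * (k : ℝ[X]) * X * uu k = ((2*k : ℕ) : ℝ[X]) * (X * uu k) := by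
    push_cast; ring
  rw [iterB (uu k) k, h2, Polynomial.iterate_derivative_natCast_mul, iterA (uu k) k] at h1
  have e1 : derivative (Rod k) = derivative^[k+1] (uu k) :=
    (Function.iterate_succ_apply' derivative k (uu k)).symm
  have e2 : derivative (derivative (Rod k)) = derivative^[k+2] (uu k) := by
    rw [e1]; exact (Function.iterate_succ_apply' derivative (k+1) (uu k)).symm
  rw [e2, e1, Rod]
  push_cast at h1 ⊢
  linear_combination h1


lemma polyIntegrable (p : ℝ[X]) : IntervalIntegrable (fun x => p.eval x) MeasureTheory.volume (-1:ℝ) 1 :=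
  (Polynomial.continuous p).intervalIntegrable _ _

lemma poly_parts (p q : ℝ[X]) :
    ∫ x in (-1:ℝ)..1, (derivative p).eval x * q.eval x
      = (p*q).eval 1 - (p*q).eval (-1) - ∫ x in (-1:ℝ)..1, p.eval x * (derivative q).eval x := by
  have h : ∀ x ∈ Set.uIcc (-1:ℝ) 1, HasDerivAt (fun y => (p*q).eval y)
      ((derivative p).eval x * q.eval x + p.eval x * (derivative q).eval x) x := by
    intro x _
    simpa [derivative_mul] using (p*q).hasDerivAt x
  have hint : IntervalIntegrable (fun x => (derivative p).eval x * q.eval x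
      + p.eval x * (derivative q).eval x) MeasureTheory.volume (-1:ℝ) 1 := by
    exact (((derivative p).continuous.mul q.continuous).add
      (p.continuous.mul (derivative q).continuous)).intervalIntegrable _ _
  have := intervalIntegral.integral_eq_sub_of_hasDerivAt h hint
  rw [intervalIntegral.integral_add (f := fun x => (derivative p).eval x * q.eval x)
    (g := fun x => p.eval x * (derivative q).eval x)
    (((derivative p).continuous.mul q.continuous).intervalIntegrable _ _)
    ((p.continuous.mul (derivative q).continuous).intervalIntegrable _ _)] at this
  linarith

lemma shift_integral (k : ℕ) (q : ℝ[X]) : ∀ j, j ≤ k →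
    ∫ x in (-1:ℝ)..1, (Rod k).eval x * q.eval x
      = (-1:ℝ)^j * ∫ x in (-1:ℝ)..1, (derivative^[k-j] (uu k)).eval x * (derivative^[j] q).eval x := by
  intro j
  induction j with
  | zero => simp [Rod]
  | succ j ih =>
    intro hj
    rw [ih (by omega)]
    have e1 : derivative^[k-j] (uu k) = derivative (derivative^[k-(j+1)] (uu k)) := by
      rw [← Function.iterate_succ_apply' derivative (k-(j+1))]
      congr 1
      omega
    rw [e1, poly_parts]
    have b1 : ((derivative^[k-(j+1)] (uu k)) * derivative^[j] q).eval 1 = 0 := by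
      rw [eval_mul, eval_uu_deriv_one k _ (by omega), zero_mul]
    have b2 : ((derivative^[k-(j+1)] (uu k)) * derivative^[j] q).eval (-1) = 0 := by
      rw [eval_mul, eval_uu_deriv_neg_one k _ (by omega), zero_mul]
    rw [b1, b2, Function.iterate_succ_apply' derivative j q]
    ring

lemma rod_orthogonal {j k : ℕ} (hjk : j < k) :
    ∫ x in (-1:ℝ)..1, (Rod k).eval x * (Rod j).eval x = 0 := by
  rw [shift_integral k (Rod j) k le_rfl]
  have : derivative^[k] (Rod j) = 0 := by
    rw [Rod, ← Function.iterate_add_apply]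
    apply Polynomial.iterate_derivative_eq_zero
    calc (uu j).natDegree ≤ 2 * j := by
          rw [uu]
          refine le_trans (natDegree_pow_le) ?_
          have h2 : ((X:ℝ[X])^2 - 1).natDegree ≤ 2 := by
            refine le_trans (natDegree_sub_le _ _) ?_
            simp [natDegree_X_pow]
          calc j * ((X:ℝ[X])^2-1).natDegree ≤ j * 2 := Nat.mul_le_mul_left j h2
            _ = 2 * j := by ring
      _ < k + j := by omega
  rw [this]
  simp

lemma monic_uu (k : ℕ) : (uu k).Monic := by
  rw [uu]
  have : ((X:ℝ[X])^2 - 1) = X^2 - C 1 := by rw [C_1]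
  rw [this]
  exact (monic_X_pow_sub_C 1 (by norm_num)).pow k

lemma natDegree_uu (k : ℕ) : (uu k).natDegree = 2*k := by
  rw [uu]
  have : ((X:ℝ[X])^2 - 1) = X^2 - C 1 := by rw [C_1]
  rw [this, Monic.natDegree_pow (monic_X_pow_sub_C 1 (by norm_num)), natDegree_X_pow_sub_C]
  ring

lemma iter_deriv_uu_self (k : ℕ) : derivative^[2*k] (uu k) = C ((2*k).factorial : ℝ) := by
  rcases Nat.eq_zero_or_pos k with hk | hk
  · subst hk; simp [uu]
  · have hsplit : uu k = X^(2*k) - (X^(2*k) - uu k) := by ring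
    have hdu : degree (uu k) = ((2*k : ℕ) : WithBot ℕ) := by
      rw [Polynomial.degree_eq_natDegree (monic_uu k).ne_zero, natDegree_uu]
    have hdeg : (X^(2*k) - uu k).natDegree < 2*k := by
      by_cases h0 : (X^(2*k) - uu k) = 0
      · rw [h0]; simpa using by positivity
      · rw [natDegree_lt_iff_degree_lt h0]
        have hdp : degree ((X:ℝ[X])^(2*k)) = degree (uu k) := by rw [degree_X_pow, hdu]
        have hlc : leadingCoeff ((X:ℝ[X])^(2*k)) = leadingCoeff (uu k) := by
          rw [leadingCoeff_X_pow, (monic_uu k).leadingCoeff]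
        have hlt := Polynomial.degree_sub_lt hdp (pow_ne_zero _ X_ne_zero) hlc
        rwa [degree_X_pow] at hlt
    rw [hsplit, Polynomial.iterate_derivative_sub,
      Polynomial.iterate_derivative_eq_zero hdeg,
      Polynomial.iterate_derivative_X_pow_eq_C_mul, Nat.sub_self, pow_zero,
      Nat.descFactorial_self, sub_zero, mul_one]

lemma rod_norm (k : ℕ) :
    ∫ x in (-1:ℝ)..1, (Rod k).eval x * (Rod k).eval x
      = (2*k).factorial * ∫ x in (-1:ℝ)..1, (1-x^2)^k := by
  rw [shift_integral k (Rod k) k le_rfl, Nat.sub_self, Function.iterate_zero_apply]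
  have hdd : derivative^[k] (Rod k) = C ((2*k).factorial : ℝ) := by
    rw [Rod, ← Function.iterate_add_apply, show k + k = 2*k by ring]
    exact iter_deriv_uu_self k
  rw [hdd]
  simp only [eval_C]
  rw [intervalIntegral.integral_mul_const]
  have : ∫ x in (-1:ℝ)..1, (1-x^2)^k = ∫ x in (-1:ℝ)..1, (-1:ℝ)^k * (uu k).eval x := by
    apply intervalIntegral.integral_congr
    intro x _
    simp only [uu, eval_pow, eval_sub, eval_one, eval_X, ← mul_pow]
    ring_nf
  rw [this, intervalIntegral.integral_const_mul]
  ring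


noncomputable def Jv (k : ℕ) : ℝ := ∫ x in (-1:ℝ)..1, (1-x^2)^k

lemma Jv_zero : Jv 0 = 2 := by norm_num [Jv]

lemma Jv_cont (k : ℕ) : Continuous fun x : ℝ => (1-x^2)^k :=
  (continuous_const.sub (continuous_pow 2)).pow k

lemma Jv_rec (k : ℕ) : (2*(k:ℝ)+3) * Jv (k+1) = (2*(k:ℝ)+2) * Jv k := by
  have hF : ∀ x : ℝ, HasDerivAt (fun x : ℝ => x * (1-x^2)^(k+1))
      ((2*(k:ℝ)+3) * (1-x^2)^(k+1) - (2*(k:ℝ)+2) * (1-x^2)^k) x := by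
    intro x
    have h1 : HasDerivAt (fun x : ℝ => 1 - x^2) (-(2*x)) x := by
      simpa using (hasDerivAt_pow 2 x).const_sub 1
    have h2 := h1.pow (k+1)
    have h3 := (hasDerivAt_id x).mul h2
    refine h3.congr_deriv ?_
    simp only [id_eq, Pi.pow_apply]
    push_cast
    ring
  have hint : IntervalIntegrable (fun x : ℝ => (2*(k:ℝ)+3) * (1-x^2)^(k+1) - (2*(k:ℝ)+2) * (1-x^2)^k)
      MeasureTheory.volume (-1:ℝ) 1 :=
    ((continuous_const.mul (Jv_cont (k+1))).sub (continuous_const.mul (Jv_cont k))).intervalIntegrable _ _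
  have h := intervalIntegral.integral_eq_sub_of_hasDerivAt (f := fun x : ℝ => x * (1-x^2)^(k+1))
    (fun x _ => hF x) hint
  rw [intervalIntegral.integral_sub (f := fun x : ℝ => (2*(k:ℝ)+3) * (1-x^2)^(k+1))
    (g := fun x : ℝ => (2*(k:ℝ)+2) * (1-x^2)^k) ((continuous_const.mul (Jv_cont (k+1))).intervalIntegrable _ _)
    ((continuous_const.mul (Jv_cont k)).intervalIntegrable _ _),
    intervalIntegral.integral_const_mul, intervalIntegral.integral_const_mul] at h
  have : ((1:ℝ) - 1^2) ^ (k+1) = 0 := by norm_num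
  rw [Jv, Jv]
  norm_num at h
  linarith

lemma Jv_formula (k : ℕ) : Jv k = 2 * 4^k * (k.factorial)^2 / ((2*k+1).factorial) := by
  induction k with
  | zero => simpa using Jv_zero
  | succ k ih =>
    have hrec := Jv_rec k
    have h3 : (2*(k:ℝ)+3) ≠ 0 := by positivity
    have hJ : Jv (k+1) = (2*(k:ℝ)+2) * Jv k / (2*(k:ℝ)+3) := by
      field_simp at hrec ⊢
      linarith
    rw [hJ, ih]
    have hf1 : ((2*(k+1)+1).factorial : ℝ) = (2*(k:ℝ)+3) * ((2*(k:ℝ)+2) * ((2*k+1).factorial : ℝ)) := by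
      have e1 : 2*(k+1)+1 = (2*k+2)+1 := by ring
      rw [e1, Nat.factorial_succ, show (2*k+2) = (2*k+1)+1 from rfl, Nat.factorial_succ]
      push_cast
      ring
    have hf2 : (((k+1).factorial : ℝ)) = ((k:ℝ)+1) * (k.factorial : ℝ) := by
      rw [Nat.factorial_succ]; push_cast; ring
    have hfpos : ((2*k+1).factorial : ℝ) > 0 := by positivity
    rw [hf1, hf2]
    field_simp
    ring

lemma Jv_pos (k : ℕ) : 0 < Jv k := by
  rw [Jv_formula]; positivity

lemma key_ratio (k : ℕ) :
    ((2:ℝ)^k * k.factorial)^2 = (2*(k:ℝ)+1)/2 * ((2*k).factorial * Jv k) := by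
  rw [Jv_formula]
  have hf : ((2*k+1).factorial : ℝ) = (2*(k:ℝ)+1) * ((2*k).factorial : ℝ) := by
    rw [Nat.factorial_succ]; push_cast; ring
  rw [hf]
  have h1 : ((2*k).factorial : ℝ) > 0 := by positivity
  have h2 : (2*(k:ℝ)+1) > 0 := by positivity
  have h4 : (4:ℝ)^k = 2^(k*2) := by
    rw [show (4:ℝ)=2^2 by norm_num, ← pow_mul]
    congr 1
    omega
  rw [h4]
  field_simp
  ring


lemma rod_bound (k : ℕ) {x : ℝ} (hx : x ∈ Set.Icc (-1:ℝ) 1) :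
    |(Rod k).eval x| ≤ 2 ^ k * k.factorial := by
  rcases Nat.eq_zero_or_pos k with hk | hk
  · subst hk
    simp [Rod, uu]
  -- setup
  set y := Rod k with hy
  set c : ℝ := (k:ℝ) * ((k:ℝ)+1) with hc
  have hcpos : 0 < c := by
    have : (1:ℝ) ≤ (k:ℝ) := by exact_mod_cast hk
    rw [hc]; nlinarith
  set F : ℝ → ℝ := fun t => c * (y.eval t)^2 + (1-t^2) * ((derivative y).eval t)^2 with hF
  have hode : ∀ t : ℝ, (t^2-1) * (derivative (derivative y)).eval t
      + 2*t*((derivative y).eval t) = c * y.eval t := by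
    intro t
    have h := congrArg (eval t) (rod_ode k)
    simpa [eval_mul, eval_add, hc] using h
  have hder : ∀ t : ℝ, HasDerivAt F (2*t*((derivative y).eval t)^2) t := by
    intro t
    have h1 := ((Polynomial.hasDerivAt y t).pow 2).const_mul c
    have h2 : HasDerivAt (fun u : ℝ => 1 - u^2) (-(2*t)) t := by
      simpa using (hasDerivAt_pow 2 t).const_sub 1
    have h3 := (Polynomial.hasDerivAt (derivative y) t).pow 2
    have h4 := h2.mul h3
    have h5 := h1.add h4
    refine h5.congr_deriv ?_
    push_cast [Pi.pow_apply]
    linear_combination (-2 * eval t (derivative y)) * (hode t)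
  have hcont : Continuous F :=
    (continuous_const.mul (y.continuous.pow 2)).add
      ((continuous_const.sub (continuous_pow 2)).mul ((derivative y).continuous.pow 2))
  have hdiff : Differentiable ℝ F := fun t => (hder t).differentiableAt
  have hderiv_eq : ∀ t : ℝ, deriv F t = 2*t*((derivative y).eval t)^2 :=
    fun t => (hder t).deriv
  have hmono : MonotoneOn F (Set.Icc (0:ℝ) 1) := by
    apply monotoneOn_of_deriv_nonneg (convex_Icc 0 1) hcont.continuousOn
      (fun t _ => (hdiff t).differentiableWithinAt)
    intro t ht
    rw [interior_Icc] at ht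
    rw [hderiv_eq]
    have := ht.1
    positivity
  have hanti : AntitoneOn F (Set.Icc (-1:ℝ) (0:ℝ)) := by
    apply antitoneOn_of_deriv_nonpos (convex_Icc (-1) 0) hcont.continuousOn
      (fun t _ => (hdiff t).differentiableWithinAt)
    intro t ht
    rw [interior_Icc] at ht
    rw [hderiv_eq]
    have h1 : t ≤ 0 := le_of_lt ht.2
    have h2 : (0:ℝ) ≤ ((derivative y).eval t)^2 := sq_nonneg _
    nlinarith
  set M : ℝ := 2 ^ k * k.factorial with hM
  have hMpos : 0 < M := by positivity
  have hF1 : F 1 = c * M^2 := by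
    simp only [hF, hy]
    rw [Rod_eval_one]
    norm_num
    exact Or.inl (by rw [hM])
  have hFm1 : F (-1) = c * M^2 := by
    simp only [hF, hy]
    rw [Rod_eval_neg_one]
    have : ((-2:ℝ)^k * k.factorial)^2 = M^2 := by
      rw [hM]
      rw [mul_pow, mul_pow, ← pow_mul, ← pow_mul, Nat.mul_comm k 2, pow_mul, pow_mul]
      norm_num
    rw [this]
    norm_num
  have hFx : F x ≤ c * M^2 := by
    rcases le_total 0 x with h0 | h0
    · have := hmono (Set.mem_Icc.2 ⟨h0, hx.2⟩) (Set.mem_Icc.2 ⟨zero_le_one, le_refl 1⟩) hx.2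
      rwa [hF1] at this
    · have := hanti (Set.mem_Icc.2 ⟨le_refl (-1:ℝ), by norm_num⟩) (Set.mem_Icc.2 ⟨hx.1, h0⟩) hx.1
      rwa [hFm1] at this
  have hyx : c * (y.eval x)^2 ≤ c * M^2 := by
    have h1 : (0:ℝ) ≤ (1-x^2) * ((derivative y).eval x)^2 := by
      have hx1 : x^2 ≤ 1 := by
        rcases hx with ⟨ha, hb⟩
        nlinarith
      have := sq_nonneg ((derivative y).eval x)
      nlinarith
    calc c * (y.eval x)^2 ≤ F x := by rw [hF]; simp; linarith
      _ ≤ c * M^2 := hFx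
  have h2 : (y.eval x)^2 ≤ M^2 := le_of_mul_le_mul_left hyx hcpos
  calc |y.eval x| = Real.sqrt ((y.eval x)^2) := (Real.sqrt_sq_eq_abs _).symm
    _ ≤ Real.sqrt (M^2) := Real.sqrt_le_sqrt h2
    _ = M := by rw [Real.sqrt_sq hMpos.le]


lemma coeff_Rod_self (k : ℕ) : (Rod k).coeff k = ((2*k).descFactorial k : ℝ) := by
  rw [Rod, Polynomial.coeff_iterate_derivative]
  have h1 : (uu k).coeff (k + k) = 1 := by
    have := (monic_uu k).leadingCoeff
    rwa [Polynomial.leadingCoeff, natDegree_uu, show 2*k = k+k by ring] at this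
  rw [h1, show k + k = 2*k by ring]
  simp

lemma coeff_Rod_self_ne (k : ℕ) : (Rod k).coeff k ≠ 0 := by
  rw [coeff_Rod_self]
  have : (2*k).descFactorial k ≠ 0 := by
    rw [Ne, Nat.descFactorial_eq_zero_iff_lt]
    omega
  exact_mod_cast this

lemma degree_Rod_le (k : ℕ) : (Rod k).degree ≤ (k : ℕ) := by
  apply Polynomial.degree_le_of_natDegree_le
  have h := Polynomial.natDegree_iterate_derivative (uu k) k
  rw [natDegree_uu] at h
  rw [Rod]
  omega

lemma exists_rep : ∀ (m : ℕ) (P : ℝ[X]), P.degree ≤ (m:ℕ) →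
    ∃ c : ℕ → ℝ, P = ∑ k ∈ Finset.range (m+1), C (c k) * Rod k := by
  intro m
  induction m with
  | zero =>
    intro P hdeg
    refine ⟨fun _ => P.coeff 0, ?_⟩
    have h0 : Rod 0 = 1 := by simp [Rod, uu]
    rw [Finset.sum_range_one, h0, mul_one]
    exact Polynomial.eq_C_of_degree_le_zero (by exact_mod_cast hdeg)
  | succ m ih =>
    intro P hdeg
    set a : ℝ := P.coeff (m+1) / (Rod (m+1)).coeff (m+1) with ha
    set Q : ℝ[X] := P - C a * Rod (m+1) with hQ
    have hQdeg1 : Q.degree ≤ ((m+1 : ℕ) : WithBot ℕ) := by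
      refine le_trans (degree_sub_le _ _) (max_le hdeg ?_)
      calc (C a * Rod (m+1)).degree ≤ (C a).degree + (Rod (m+1)).degree := degree_mul_le _ _
        _ ≤ 0 + ((m+1:ℕ) : WithBot ℕ) := add_le_add degree_C_le (degree_Rod_le (m+1))
        _ = ((m+1:ℕ) : WithBot ℕ) := zero_add _
    have hQcoeff : Q.coeff (m+1) = 0 := by
      rw [hQ, Polynomial.coeff_sub, Polynomial.coeff_C_mul, ha,
        div_mul_cancel₀ _ (coeff_Rod_self_ne (m+1)), sub_self]
    have hQdeg : Q.degree ≤ (m : ℕ) := by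
      rw [Polynomial.degree_le_iff_coeff_zero]
      intro N hN
      rcases eq_or_lt_of_le (show (m+1 : ℕ) ≤ N by exact_mod_cast hN) with h | h
      · rw [← h]; exact hQcoeff
      · exact Polynomial.coeff_eq_zero_of_degree_lt (lt_of_le_of_lt hQdeg1 (by exact_mod_cast h))
    obtain ⟨c', hc'⟩ := ih Q hQdeg
    refine ⟨fun j => if j = m+1 then a else c' j, ?_⟩
    rw [Finset.sum_range_succ]
    have hif : (fun j => if j = m+1 then a else c' j) (m+1) = a := if_pos rfl
    have hsum : ∑ k ∈ Finset.range (m+1), C (if k = m+1 then a else c' k) * Rod k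
        = ∑ k ∈ Finset.range (m+1), C (c' k) * Rod k := by
      refine Finset.sum_congr rfl fun j hj => ?_
      rw [Finset.mem_range] at hj
      rw [if_neg (by omega)]
    rw [hsum, ← hc', hQ]
    simp

noncomputable def Nk (k : ℕ) : ℝ := ((2*k).factorial : ℝ) * Jv k

lemma rod_norm' (k : ℕ) :
    ∫ x in (-1:ℝ)..1, (Rod k).eval x * (Rod k).eval x = Nk k := by
  rw [Nk, Jv]
  exact rod_norm k


lemma Nk_pos (k : ℕ) : 0 < Nk k := by
  have := Jv_pos k
  have h2 : (0:ℝ) < ((2*k).factorial : ℝ) := by positivity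
  exact mul_pos h2 this

lemma rod_orth' {j k : ℕ} (h : j ≠ k) :
    ∫ x in (-1:ℝ)..1, (Rod j).eval x * (Rod k).eval x = 0 := by
  rcases lt_or_gt_of_ne h with hlt | hgt
  · have := rod_orthogonal hlt
    rw [← this]
    apply intervalIntegral.integral_congr
    intro x _
    exact mul_comm _ _
  · exact rod_orthogonal hgt

lemma inner_P_rod (n : ℕ) (P : ℝ[X]) (c : ℕ → ℝ)
    (hc : P = ∑ j ∈ Finset.range (n+1), C (c j) * Rod j) {k : ℕ} (hk : k ∈ Finset.range (n+1)) :
    ∫ x in (-1:ℝ)..1, P.eval x * (Rod k).eval x = c k * Nk k := by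
  have h1 : (∫ x in (-1:ℝ)..1, P.eval x * (Rod k).eval x)
      = ∑ j ∈ Finset.range (n+1), ∫ x in (-1:ℝ)..1, c j * ((Rod j).eval x * (Rod k).eval x) := by
    rw [← intervalIntegral.integral_finset_sum]
    · apply intervalIntegral.integral_congr
      intro x _
      rw [hc]
      simp [eval_finset_sum, Finset.sum_mul, mul_assoc]
    · intro j _
      exact (continuous_const.mul ((Rod j).continuous.mul (Rod k).continuous)).intervalIntegrable _ _
  rw [h1]
  rw [Finset.sum_eq_single k]
  · rw [intervalIntegral.integral_const_mul, rod_norm']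
  · intro j _ hjk
    rw [intervalIntegral.integral_const_mul, rod_orth' hjk, mul_zero]
  · intro hk'
    exact absurd hk hk'

lemma reproducing (n : ℕ) (P : ℝ[X]) (hP : P.degree ≤ (n:ℕ)) (t : ℝ) :
    P.eval t = ∑ k ∈ Finset.range (n+1),
      (∫ x in (-1:ℝ)..1, P.eval x * (Rod k).eval x) * (Rod k).eval t / Nk k := by
  obtain ⟨c, hc⟩ := exists_rep n P hP
  have : ∀ k ∈ Finset.range (n+1),
      (∫ x in (-1:ℝ)..1, P.eval x * (Rod k).eval x) * (Rod k).eval t / Nk k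
        = c k * (Rod k).eval t := by
    intro k hk
    rw [inner_P_rod n P c hc hk]
    field_simp [(Nk_pos k).ne']
  rw [Finset.sum_congr rfl this, hc]
  simp [eval_finset_sum]

lemma sum_odd (n : ℕ) : ∑ k ∈ Finset.range (n+1), (2*(k:ℝ)+1) = ((n:ℝ)+1)^2 := by
  induction n with
  | zero => norm_num
  | succ n ih =>
    rw [Finset.sum_range_succ, ih]
    push_cast
    ring

theorem sup_norm_le_L1_norm (n : ℕ) (P : Polynomial ℝ) (hP : P.degree ≤ n) :
    ∀ x ∈ Set.Icc (-1 : ℝ) 1,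
      |P.eval x| ≤ ((n : ℝ) + 1) ^ 2 * ∫ x in (-1 : ℝ)..1, |P.eval x| := by
  intro t ht
  set L : ℝ := ∫ x in (-1:ℝ)..1, |P.eval x| with hL
  have hLnn : 0 ≤ L := by
    rw [hL]
    apply intervalIntegral.integral_nonneg (by norm_num)
    intro x _
    exact abs_nonneg _
  have habs : ∀ k : ℕ, |∫ x in (-1:ℝ)..1, P.eval x * (Rod k).eval x| ≤ (2^k * k.factorial) * L := by
    intro k
    calc |∫ x in (-1:ℝ)..1, P.eval x * (Rod k).eval x|
        ≤ ∫ x in (-1:ℝ)..1, |P.eval x * (Rod k).eval x| :=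
          intervalIntegral.abs_integral_le_integral_abs (by norm_num)
      _ ≤ ∫ x in (-1:ℝ)..1, |P.eval x| * (2^k * k.factorial) := by
          apply intervalIntegral.integral_mono_on (by norm_num)
          · exact ((P.continuous.mul (Rod k).continuous).abs).intervalIntegrable _ _
          · exact ((P.continuous.abs).mul continuous_const).intervalIntegrable _ _
          · intro x hx
            rw [abs_mul]
            exact mul_le_mul_of_nonneg_left (rod_bound k hx) (abs_nonneg _)
      _ = (2^k * k.factorial) * L := by
          rw [intervalIntegral.integral_mul_const, hL, mul_comm]
  have hrep := reproducing n P hP t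
  have hterm : ∀ k ∈ Finset.range (n+1),
      |(∫ x in (-1:ℝ)..1, P.eval x * (Rod k).eval x) * (Rod k).eval t / Nk k|
        ≤ (2*(k:ℝ)+1)/2 * L := by
    intro k _
    rw [abs_div, abs_mul, abs_of_pos (Nk_pos k)]
    have hb := rod_bound k ht
    have hM : (0:ℝ) < 2^k * k.factorial := by positivity
    have h1 : |∫ x in (-1:ℝ)..1, P.eval x * (Rod k).eval x| * |(Rod k).eval t|
        ≤ ((2^k * k.factorial) * L) * (2^k * k.factorial) :=
      mul_le_mul (habs k) hb (abs_nonneg _) (by positivity)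
    have h2 : ((2^k * k.factorial) * L) * ((2:ℝ)^k * k.factorial) = ((2*(k:ℝ)+1)/2 * Nk k) * L := by
      have := key_ratio k
      rw [Nk]
      nlinarith [this]
    rw [div_le_iff₀ (Nk_pos k)]
    calc |∫ x in (-1:ℝ)..1, P.eval x * (Rod k).eval x| * |(Rod k).eval t|
        ≤ ((2*(k:ℝ)+1)/2 * Nk k) * L := by rw [← h2]; exact h1
      _ = (2*(k:ℝ)+1)/2 * L * Nk k := by ring
  calc |P.eval t| = |∑ k ∈ Finset.range (n+1),
        (∫ x in (-1:ℝ)..1, P.eval x * (Rod k).eval x) * (Rod k).eval t / Nk k| := by rw [← hrep]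
    _ ≤ ∑ k ∈ Finset.range (n+1),
        |(∫ x in (-1:ℝ)..1, P.eval x * (Rod k).eval x) * (Rod k).eval t / Nk k| :=
          Finset.abs_sum_le_sum_abs _ _
    _ ≤ ∑ k ∈ Finset.range (n+1), (2*(k:ℝ)+1)/2 * L := Finset.sum_le_sum hterm
    _ = (∑ k ∈ Finset.range (n+1), (2*(k:ℝ)+1)) / 2 * L := by
        rw [Finset.sum_div, Finset.sum_mul]
    _ = ((n:ℝ)+1)^2 / 2 * L := by rw [sum_odd]
    _ ≤ ((n:ℝ)+1)^2 * L := by nlinarith [hLnn, sq_nonneg ((n:ℝ)+1)]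
end

section
/- Let $a_1,\dots,a_n$ be complex numbers with $\sum_{q=1}^n |a_q| \le m$, let $y_1,\dots,y_n \in [O-D, O+D]$ (with $D > 0$), and let $s$ be a positive integer with $s+1 > D$ and $\frac{D^s (s+1)}{s!\sqrt{2s+1}\,(s+1-D)} \le \frac{\sigma}{m}$. Then for every $x \in [-1,1]$, the truncation error of the multipole expansion satisfies $\left|\sum_{q=1}^n a_q e^{i y_q x} - \sum_{r=0}^{s-1}\left(\sum_{q=1}^n \frac{a_q (y_q - O)^r}{r!}\right) e^{iOx}(ix)^r\right| \le \sigma \sqrt{2s+1}$. -/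
open Complex Finset

set_option maxHeartbeats 800000 in
lemma exp_tail_bound (D : ℝ) (s : ℕ) (hD : 0 < D) (hsD : D < (s : ℝ) + 1)
    (z : ℂ) (hz : ‖z‖ ≤ D) :
    ‖Complex.exp z - ∑ r ∈ Finset.range s, z ^ r / (Nat.factorial r : ℂ)‖ ≤
      D ^ s * ((s : ℝ) + 1) / ((Nat.factorial s : ℝ) * ((s : ℝ) + 1 - D)) := by
  have hsum : Summable (fun r : ℕ => z ^ r / (Nat.factorial r : ℂ)) :=
    NormedSpace.expSeries_div_summable z
  have hexp : Complex.exp z = ∑' r : ℕ, z ^ r / (Nat.factorial r : ℂ) := by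
    rw [Complex.exp_eq_exp_ℂ, NormedSpace.exp_eq_tsum_div]
  have key : Complex.exp z - ∑ r ∈ Finset.range s, z ^ r / (Nat.factorial r : ℂ)
      = ∑' r : ℕ, z ^ (r + s) / (Nat.factorial (r + s) : ℂ) := by
    rw [hexp, ← Summable.sum_add_tsum_nat_add s hsum]; ring
  set c : ℝ := D / ((s : ℝ) + 1) with hc
  have hc0 : 0 ≤ c := div_nonneg hD.le (by positivity)
  have hc1 : c < 1 := (div_lt_one (by positivity)).2 hsD
  have hterm : ∀ r : ℕ, ‖z ^ (r + s) / (Nat.factorial (r + s) : ℂ)‖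
      ≤ D ^ s / (Nat.factorial s : ℝ) * c ^ r := by
    intro r
    have h1 : ‖z ^ (r + s) / (Nat.factorial (r + s) : ℂ)‖
        = ‖z‖ ^ (r + s) / (Nat.factorial (r + s) : ℝ) := by
      rw [norm_div, norm_pow]
      simp
    rw [h1]
    have h2 : ‖z‖ ^ (r + s) ≤ D ^ (r + s) :=
      pow_le_pow_left₀ (norm_nonneg z) hz _
    have hfac : (Nat.factorial s : ℝ) * ((s : ℝ) + 1) ^ r ≤ (Nat.factorial (r + s) : ℝ) := by
      have := Nat.factorial_mul_pow_le_factorial (m := s) (n := r)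
      calc (Nat.factorial s : ℝ) * ((s : ℝ) + 1) ^ r
          = ((Nat.factorial s * (s + 1) ^ r : ℕ) : ℝ) := by push_cast; ring
        _ ≤ ((Nat.factorial (s + r) : ℕ) : ℝ) := by exact_mod_cast this
        _ = (Nat.factorial (r + s) : ℝ) := by rw [Nat.add_comm]
    have hfacpos : (0 : ℝ) < (Nat.factorial (r + s) : ℝ) := by
      exact_mod_cast Nat.factorial_pos _
    have hspos : (0 : ℝ) < (Nat.factorial s : ℝ) * ((s : ℝ) + 1) ^ r := by positivity
    calc ‖z‖ ^ (r + s) / (Nat.factorial (r + s) : ℝ)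
        ≤ D ^ (r + s) / (Nat.factorial (r + s) : ℝ) := by gcongr
      _ ≤ D ^ (r + s) / ((Nat.factorial s : ℝ) * ((s : ℝ) + 1) ^ r) := by
          gcongr
      _ = D ^ s / (Nat.factorial s : ℝ) * c ^ r := by
          rw [hc, div_pow, pow_add]
          field_simp
  have hgsum : Summable (fun r : ℕ => D ^ s / (Nat.factorial s : ℝ) * c ^ r) :=
    (summable_geometric_of_lt_one hc0 hc1).mul_left _
  have habs_sum : Summable (fun r : ℕ => ‖z ^ (r + s) / (Nat.factorial (r + s) : ℂ)‖) :=
    Summable.of_nonneg_of_le (fun r => norm_nonneg _) hterm hgsum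
  rw [key]
  calc ‖∑' r : ℕ, z ^ (r + s) / (Nat.factorial (r + s) : ℂ)‖
      ≤ ∑' r : ℕ, ‖z ^ (r + s) / (Nat.factorial (r + s) : ℂ)‖ :=
        norm_tsum_le_tsum_norm habs_sum
    _ ≤ ∑' r : ℕ, D ^ s / (Nat.factorial s : ℝ) * c ^ r :=
        Summable.tsum_le_tsum hterm habs_sum hgsum
    _ = D ^ s / (Nat.factorial s : ℝ) * (1 - c)⁻¹ := by
        rw [tsum_mul_left, tsum_geometric_of_lt_one hc0 hc1]
    _ = D ^ s * ((s : ℝ) + 1) / ((Nat.factorial s : ℝ) * ((s : ℝ) + 1 - D)) := by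
        have hs1 : (0 : ℝ) < (s : ℝ) + 1 - D := by linarith
        have hf : (0 : ℝ) < (Nat.factorial s : ℝ) := by exact_mod_cast Nat.factorial_pos _
        have h1 : (1 : ℝ) - c = ((s : ℝ) + 1 - D) / ((s : ℝ) + 1) := by
          rw [hc]; field_simp
        rw [h1, inv_div]
        field_simp

theorem multipole_truncation_error (n : ℕ) (a : Fin n → ℂ) (y : Fin n → ℝ)
    (O D m σ : ℝ) (hD : 0 < D) (hσ : 0 < σ)
    (ha : ∑ q, ‖a q‖ ≤ m)
    (hy : ∀ q, y q ∈ Set.Icc (O - D) (O + D))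
    (s : ℕ) (hs : 1 ≤ s) (hsD : D < (s : ℝ) + 1)
    (hcond : D ^ s * ((s : ℝ) + 1) /
        ((Nat.factorial s : ℝ) * Real.sqrt (2 * s + 1) * ((s : ℝ) + 1 - D)) ≤ σ / m) :
    ∀ x ∈ Set.Icc (-1 : ℝ) 1,
      ‖((∑ q, a q * Complex.exp (Complex.I * (y q : ℂ) * (x : ℂ))) -
          ∑ r ∈ Finset.range s,
            (∑ q, a q * ((y q : ℂ) - (O : ℂ)) ^ r / (Nat.factorial r : ℂ)) *
              Complex.exp (Complex.I * (O : ℂ) * (x : ℂ)) * (Complex.I * (x : ℂ)) ^ r)‖ ≤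
        σ * Real.sqrt (2 * s + 1) := by
  intro x hx
  obtain ⟨hx1, hx2⟩ := hx
  have hxabs : |x| ≤ 1 := abs_le.2 ⟨hx1, hx2⟩
  have hsqrt : (0 : ℝ) < Real.sqrt (2 * s + 1) := Real.sqrt_pos.2 (by positivity)
  have hs1 : (0 : ℝ) < (s : ℝ) + 1 - D := by linarith
  have hf : (0 : ℝ) < (Nat.factorial s : ℝ) := by exact_mod_cast Nat.factorial_pos _
  set T : ℝ := D ^ s * ((s : ℝ) + 1) / ((Nat.factorial s : ℝ) * ((s : ℝ) + 1 - D)) with hT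
  have hTpos : 0 < T := by rw [hT]; positivity
  have hm0 : 0 ≤ m := le_trans (Finset.sum_nonneg fun q _ => norm_nonneg _) ha
  have hT'pos : 0 < D ^ s * ((s : ℝ) + 1) /
      ((Nat.factorial s : ℝ) * Real.sqrt (2 * s + 1) * ((s : ℝ) + 1 - D)) := by positivity
  have hmpos : 0 < m := by
    rcases hm0.lt_or_eq with h | h
    · exact h
    · exfalso
      rw [← h, div_zero] at hcond
      linarith
  have hmT : m * T ≤ σ * Real.sqrt (2 * s + 1) := by
    have h1 : T = (D ^ s * ((s : ℝ) + 1) /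
        ((Nat.factorial s : ℝ) * Real.sqrt (2 * s + 1) * ((s : ℝ) + 1 - D))) *
        Real.sqrt (2 * s + 1) := by
      rw [hT]; field_simp
    have h2 : m * (D ^ s * ((s : ℝ) + 1) /
        ((Nat.factorial s : ℝ) * Real.sqrt (2 * s + 1) * ((s : ℝ) + 1 - D))) ≤ σ := by
      rw [mul_comm]
      exact (le_div_iff₀ hmpos).mp hcond
    calc m * T = m * (D ^ s * ((s : ℝ) + 1) /
          ((Nat.factorial s : ℝ) * Real.sqrt (2 * s + 1) * ((s : ℝ) + 1 - D))) *
          Real.sqrt (2 * s + 1) := by rw [h1]; ring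
      _ ≤ σ * Real.sqrt (2 * s + 1) := by
          apply mul_le_mul_of_nonneg_right h2 hsqrt.le
  -- rewrite the difference
  set z : Fin n → ℂ := fun q => Complex.I * ((y q : ℂ) - (O : ℂ)) * (x : ℂ) with hz
  set E : ℂ := Complex.exp (Complex.I * (O : ℂ) * (x : ℂ)) with hE
  have hEabs : ‖E‖ = 1 := by
    rw [hE]
    rw [show Complex.I * (O : ℂ) * (x : ℂ) = ((O * x : ℝ) : ℂ) * Complex.I by push_cast; ring]
    exact Complex.norm_exp_ofReal_mul_I _
  have hexp_split : ∀ q, Complex.exp (Complex.I * (y q : ℂ) * (x : ℂ)) = E * Complex.exp (z q) := by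
    intro q
    rw [hE, hz, ← Complex.exp_add]
    congr 1
    ring
  have key : (∑ q, a q * Complex.exp (Complex.I * (y q : ℂ) * (x : ℂ))) -
          ∑ r ∈ Finset.range s,
            (∑ q, a q * ((y q : ℂ) - (O : ℂ)) ^ r / (Nat.factorial r : ℂ)) *
              E * (Complex.I * (x : ℂ)) ^ r
      = ∑ q, a q * E * (Complex.exp (z q) - ∑ r ∈ Finset.range s, z q ^ r / (Nat.factorial r : ℂ)) := by
    simp_rw [mul_sub, Finset.mul_sum, Finset.sum_sub_distrib, Finset.sum_mul]
    congr 1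
    · exact Finset.sum_congr rfl fun q _ => by rw [hexp_split q]; ring
    · rw [Finset.sum_comm]
      refine Finset.sum_congr rfl fun r _ => Finset.sum_congr rfl fun q _ => ?_
      rw [hz]
      simp only [mul_pow]
      ring
  rw [key]
  calc ‖∑ q, a q * E * (Complex.exp (z q) - ∑ r ∈ Finset.range s, z q ^ r / (Nat.factorial r : ℂ))‖
      ≤ ∑ q, ‖a q * E * (Complex.exp (z q) - ∑ r ∈ Finset.range s, z q ^ r / (Nat.factorial r : ℂ))‖ :=
        norm_sum_le _ _
    _ ≤ ∑ q, ‖a q‖ * T := by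
        refine Finset.sum_le_sum fun q _ => ?_
        rw [norm_mul, norm_mul, hEabs, mul_one]
        refine mul_le_mul_of_nonneg_left ?_ (norm_nonneg _)
        apply exp_tail_bound D s hD hsD
        rw [hz]
        simp only [norm_mul, Complex.norm_I, one_mul]
        have h1 : ‖(y q : ℂ) - (O : ℂ)‖ ≤ D := by
          rw [show ((y q : ℂ) - (O : ℂ)) = ((y q - O : ℝ) : ℂ) by push_cast; ring,
            Complex.norm_real, Real.norm_eq_abs]
          obtain ⟨hy1, hy2⟩ := hy q
          rw [abs_le]; constructor <;> linarith
        have h2 : ‖(x : ℂ)‖ ≤ 1 := by rw [Complex.norm_real, Real.norm_eq_abs]; exact hxabs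
        calc ‖(y q : ℂ) - (O : ℂ)‖ * ‖(x : ℂ)‖
            ≤ D * 1 := mul_le_mul h1 h2 (norm_nonneg _) hD.le
          _ = D := mul_one D
    _ = (∑ q, ‖a q‖) * T := by rw [← Finset.sum_mul]
    _ ≤ m * T := mul_le_mul_of_nonneg_right ha hTpos.le
    _ ≤ σ * Real.sqrt (2 * s + 1) := hmT
end

section
/- Let $H$ be a complex inner product space, $K \ge 2$, and suppose vectors $w_1,\dots,w_K \in H$ lie in subspaces $V_1,\dots,V_K$ such that for all $j \ne p$ and all $u \in V_j$, $v \in V_p$, $|\langle u, v\rangle| \le \frac{c}{|j - p|}\,\|u\|\,\|v\|$ with $c \ge 0$ satisfying $2c(\ln(K/2) + 1) \le \frac{1}{2}$. Then $\left\|\sum_{j=1}^K w_j\right\|^2 \ge \frac{1}{2}\sum_{j=1}^K \|w_j\|^2$; in particular, if $\|\sum_j w_j\| \le \epsilon$ then $\|w_j\| \le \sqrt{2}\,\epsilon$ for every $j$. -/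
open Finset

/-- Sum of reciprocals `∑_{i<n} 1/(i+1)` is at most `1 + log n`. -/
private lemma hsum_le (n : ℕ) :
    ∑ i ∈ Finset.range n, (1 : ℝ) / (i + 1) ≤ 1 + Real.log n := by
  have h := harmonic_le_one_add_log n
  have : ((harmonic n : ℚ) : ℝ) = ∑ i ∈ Finset.range n, (1 : ℝ) / (i + 1) := by
    rw [harmonic]
    push_cast
    simp [one_div]
  linarith [this ▸ h]

private lemma log_add_log_le {a b K : ℕ} (hK : 2 ≤ K) (hab : a + b + 1 = K) :
    Real.log a + Real.log b ≤ 2 * Real.log ((K : ℝ) / 2) := by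
  have hKpos : (0:ℝ) < (K:ℝ) / 2 := by positivity
  have hlog2 : 2 * Real.log ((K : ℝ) / 2) = Real.log (((K:ℝ)/2) ^ 2) := by
    rw [Real.log_pow]; push_cast; ring
  have hK2 : (1:ℝ) ≤ ((K:ℝ)/2) := by
    have : (2:ℝ) ≤ (K:ℝ) := by exact_mod_cast hK
    linarith
  have hlognn : 0 ≤ 2 * Real.log ((K : ℝ) / 2) := by
    have := Real.log_nonneg hK2
    linarith
  rcases Nat.eq_zero_or_pos a with ha | ha
  · subst ha
    simp only [Nat.cast_zero, Real.log_zero, zero_add]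
    rcases Nat.eq_zero_or_pos b with hb | hb
    · simp [hb, hlognn]
    · rw [hlog2]
      apply Real.log_le_log (by exact_mod_cast hb)
      have : (b:ℝ) = (K:ℝ) - 1 := by
        have : b + 1 = K := by omega
        push_cast [← this]; ring
      rw [this]
      have hKr : (2:ℝ) ≤ (K:ℝ) := by exact_mod_cast hK
      nlinarith [sq_nonneg ((K:ℝ) - 2)]
  rcases Nat.eq_zero_or_pos b with hb | hb
  · subst hb
    simp only [Nat.cast_zero, Real.log_zero, add_zero]
    rw [hlog2]
    apply Real.log_le_log (by exact_mod_cast ha)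
    have : (a:ℝ) = (K:ℝ) - 1 := by
      have : a + 1 = K := by omega
      push_cast [← this]; ring
    rw [this]
    have hKr : (2:ℝ) ≤ (K:ℝ) := by exact_mod_cast hK
    nlinarith [sq_nonneg ((K:ℝ) - 2)]
  · rw [← Real.log_mul (by positivity) (by positivity), hlog2]
    apply Real.log_le_log (by positivity)
    have hKr : (a:ℝ) + (b:ℝ) + 1 = (K:ℝ) := by exact_mod_cast hab
    nlinarith [sq_nonneg ((a:ℝ) - (b:ℝ))]

/-- The harmonic-type bound: for any `j < K`, `∑_{p} 1/|p - j| ≤ 2 (log(K/2) + 1)`. -/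
private lemma harmonic_bound {K : ℕ} (hK : 2 ≤ K) (a : ℕ) (ha : a < K) :
    ∑ i ∈ Finset.range K, (1 : ℝ) / |(i : ℝ) - (a : ℝ)| ≤ 2 * (Real.log ((K : ℝ) / 2) + 1) := by
  have hsplit : Finset.range K = Finset.range (a+1) ∪ Finset.Ico (a+1) K := by
    rw [Finset.range_eq_Ico, Finset.range_eq_Ico]
    exact (Finset.Ico_union_Ico_eq_Ico (a := 0) (b := a+1) (c := K) (by omega) (by omega)).symm
  have hdisj : Disjoint (Finset.range (a+1)) (Finset.Ico (a+1) K) := by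
    rw [Finset.range_eq_Ico]
    exact Finset.Ico_disjoint_Ico_consecutive 0 (a+1) K
  rw [hsplit, Finset.sum_union hdisj, Finset.sum_range_succ]
  have hz : (1 : ℝ) / |(a : ℝ) - (a : ℝ)| = 0 := by simp
  rw [hz, add_zero]
  have hleft : ∑ i ∈ Finset.range a, (1 : ℝ) / |(i : ℝ) - (a : ℝ)|
      = ∑ i ∈ Finset.range a, (1 : ℝ) / (i + 1) := by
    rw [← Finset.sum_range_reflect (fun i => (1:ℝ)/(i+1)) a]
    apply Finset.sum_congr rfl
    intro i hi
    rw [Finset.mem_range] at hi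
    have h1 : ((a - 1 - i : ℕ) : ℝ) = (a : ℝ) - 1 - (i : ℝ) := by
      have : a - 1 - i = a - (1 + i) := by omega
      rw [this, Nat.cast_sub (by omega)]
      push_cast; ring
    rw [h1]
    have h2 : |(i : ℝ) - (a : ℝ)| = (a : ℝ) - (i : ℝ) := by
      rw [abs_sub_comm, abs_of_nonneg]
      have : (i:ℝ) < (a:ℝ) := by exact_mod_cast hi
      linarith
    rw [h2]; ring_nf
  have hright : ∑ i ∈ Finset.Ico (a+1) K, (1 : ℝ) / |(i : ℝ) - (a : ℝ)|
      = ∑ i ∈ Finset.range (K - (a+1)), (1 : ℝ) / (i + 1) := by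
    rw [Finset.sum_Ico_eq_sum_range]
    apply Finset.sum_congr rfl
    intro i _
    have : |((a + 1 + i : ℕ) : ℝ) - (a : ℝ)| = (i : ℝ) + 1 := by
      push_cast
      rw [abs_of_nonneg (by linarith)]
      ring
    rw [this]
  rw [hleft, hright]
  have h1 := hsum_le a
  have h2 := hsum_le (K - (a+1))
  have h3 := log_add_log_le hK (a := a) (b := K - (a+1)) (by omega)
  linarith

theorem subspace_coherence_stability {H : Type*} [NormedAddCommGroup H]
    [InnerProductSpace ℂ H] (K : ℕ) (hK : 2 ≤ K)
    (V : Fin K → Submodule ℂ H) (w : Fin K → H) (hw : ∀ j, w j ∈ V j)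
    (c : ℝ) (hc : 0 ≤ c)
    (hcoh : ∀ j p : Fin K, j ≠ p → ∀ u ∈ V j, ∀ v ∈ V p,
      ‖(inner ℂ u v : ℂ)‖ ≤ c / |((j : ℕ) : ℝ) - ((p : ℕ) : ℝ)| * ‖u‖ * ‖v‖)
    (hsmall : 2 * c * (Real.log ((K : ℝ) / 2) + 1) ≤ 1 / 2) :
    ‖∑ j, w j‖ ^ 2 ≥ (1 / 2) * ∑ j, ‖w j‖ ^ 2 ∧
      ∀ ε : ℝ, ‖∑ j, w j‖ ≤ ε → ∀ j, ‖w j‖ ≤ Real.sqrt 2 * ε := by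
  -- the coefficient function
  set g : Fin K → Fin K → ℝ := fun j p => c / |((j : ℕ) : ℝ) - ((p : ℕ) : ℝ)| with hg
  have hgnn : ∀ j p, 0 ≤ g j p := by
    intro j p; apply div_nonneg hc (abs_nonneg _)
  have hgsymm : ∀ j p, g j p = g p j := by
    intro j p; simp only [hg, abs_sub_comm]
  -- per-index harmonic bound
  have hgsum : ∀ j : Fin K, ∑ p ∈ univ.erase j, g j p ≤ 1 / 2 := by
    intro j
    have h0 : ∑ p ∈ univ.erase j, g j p = ∑ p : Fin K, g j p := by
      rw [Finset.sum_erase_eq_sub (mem_univ j)]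
      simp [hg]
    rw [h0]
    have h1 : ∑ p : Fin K, g j p = c * ∑ i ∈ Finset.range K, (1:ℝ) / |(i:ℝ) - ((j:ℕ):ℝ)| := by
      rw [Finset.mul_sum, ← Fin.sum_univ_eq_sum_range (fun i => c * ((1:ℝ) / |(i:ℝ) - ((j:ℕ):ℝ)|))]
      apply Finset.sum_congr rfl
      intro p _
      simp only [hg]
      rw [abs_sub_comm]
      ring
    rw [h1]
    have h2 := harmonic_bound hK (j : ℕ) j.isLt
    have h3 : c * ∑ i ∈ Finset.range K, (1:ℝ) / |(i:ℝ) - ((j:ℕ):ℝ)|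
        ≤ c * (2 * (Real.log ((K:ℝ)/2) + 1)) := by
      apply mul_le_mul_of_nonneg_left h2 hc
    have h4 : c * (2 * (Real.log ((K:ℝ)/2) + 1)) = 2 * c * (Real.log ((K:ℝ)/2) + 1) := by ring
    linarith
  -- cross-term bound
  have hcross : ∀ j : Fin K, ∀ p ∈ univ.erase j,
      ‖(inner ℂ (w j) (w p) : ℂ)‖ ≤ g j p * ‖w j‖ * ‖w p‖ := by
    intro j p hp
    rw [Finset.mem_erase] at hp
    exact hcoh j p (Ne.symm hp.1) (w j) (hw j) (w p) (hw p)
  -- expansion of the norm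
  have hexp : ‖∑ j, w j‖ ^ 2
      = ∑ j, ‖w j‖ ^ 2 + ∑ j, ∑ p ∈ univ.erase j, (inner ℂ (w j) (w p) : ℂ).re := by
    have h1 : ‖∑ j, w j‖ ^ 2 = (inner ℂ (∑ j, w j) (∑ j, w j) : ℂ).re := by
      rw [@norm_sq_eq_re_inner ℂ]
      rfl
    rw [h1, sum_inner]
    rw [Complex.re_sum]
    have h2 : ∀ j : Fin K, (inner ℂ (w j) (∑ p, w p) : ℂ).re
        = ‖w j‖ ^ 2 + ∑ p ∈ univ.erase j, (inner ℂ (w j) (w p) : ℂ).re := by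
      intro j
      rw [inner_sum, Complex.re_sum, ← Finset.sum_erase_add univ _ (mem_univ j)]
      have : (inner ℂ (w j) (w j) : ℂ).re = ‖w j‖ ^ 2 := by
        simpa using inner_self_eq_norm_sq (𝕜 := ℂ) (w j)
      rw [this, add_comm]
    rw [Finset.sum_congr rfl (fun j _ => h2 j), Finset.sum_add_distrib]
  -- bound the off-diagonal part
  have hoff : |∑ j, ∑ p ∈ univ.erase j, (inner ℂ (w j) (w p) : ℂ).re|
      ≤ (1/2) * ∑ j, ‖w j‖ ^ 2 := by
    calc |∑ j, ∑ p ∈ univ.erase j, (inner ℂ (w j) (w p) : ℂ).re|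
        ≤ ∑ j, |∑ p ∈ univ.erase j, (inner ℂ (w j) (w p) : ℂ).re| :=
          Finset.abs_sum_le_sum_abs _ _
      _ ≤ ∑ j, ∑ p ∈ univ.erase j, ‖(inner ℂ (w j) (w p) : ℂ)‖ := by
          apply Finset.sum_le_sum
          intro j _
          refine (Finset.abs_sum_le_sum_abs _ _).trans ?_
          apply Finset.sum_le_sum
          intro p _
          exact Complex.abs_re_le_norm _
      _ ≤ ∑ j, ∑ p ∈ univ.erase j, g j p * ((‖w j‖^2 + ‖w p‖^2) / 2) := by
          apply Finset.sum_le_sum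
          intro j _
          apply Finset.sum_le_sum
          intro p hp
          refine (hcross j p hp).trans ?_
          have habs : ‖w j‖ * ‖w p‖ ≤ (‖w j‖^2 + ‖w p‖^2) / 2 := by
            nlinarith [sq_nonneg (‖w j‖ - ‖w p‖)]
          have := mul_le_mul_of_nonneg_left habs (hgnn j p)
          nlinarith [this]
      _ = ∑ j, ‖w j‖^2 * ∑ p ∈ univ.erase j, g j p := by
          have hswap : ∑ j, ∑ p ∈ univ.erase j, g j p * ‖w p‖^2
              = ∑ j, ∑ p ∈ univ.erase j, g j p * ‖w j‖^2 := by
            rw [Finset.sum_comm' (t' := univ) (s' := fun p => univ.erase p)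
              (fun x y => by simp [Finset.mem_erase, eq_comm])]
            apply Finset.sum_congr rfl
            intro p _
            apply Finset.sum_congr rfl
            intro j _
            rw [hgsymm]
          have lhs_eq : ∑ j, ∑ p ∈ univ.erase j, g j p * ((‖w j‖^2 + ‖w p‖^2) / 2)
              = (1/2) * ((∑ j, ∑ p ∈ univ.erase j, g j p * ‖w j‖^2)
                + ∑ j, ∑ p ∈ univ.erase j, g j p * ‖w p‖^2) := by
            rw [← Finset.sum_add_distrib, Finset.mul_sum]
            apply Finset.sum_congr rfl
            intro j _
            rw [← Finset.sum_add_distrib, Finset.mul_sum]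
            apply Finset.sum_congr rfl
            intro p _
            ring
          rw [lhs_eq, hswap, ← two_mul, ← mul_assoc]
          rw [show (1/2:ℝ) * 2 = 1 by norm_num, one_mul]
          apply Finset.sum_congr rfl
          intro j _
          rw [Finset.mul_sum]
          exact Finset.sum_congr rfl fun p _ => mul_comm _ _
      _ ≤ ∑ j, ‖w j‖^2 * (1/2) := by
          apply Finset.sum_le_sum
          intro j _
          exact mul_le_mul_of_nonneg_left (hgsum j) (sq_nonneg _)
      _ = (1/2) * ∑ j, ‖w j‖ ^ 2 := by
          rw [← Finset.sum_mul, mul_comm]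
  have hmain : ‖∑ j, w j‖ ^ 2 ≥ (1 / 2) * ∑ j, ‖w j‖ ^ 2 := by
    rw [hexp]
    have := abs_le.mp hoff
    linarith [this.1]
  refine ⟨hmain, ?_⟩
  intro ε hε j
  have hε0 : 0 ≤ ε := le_trans (norm_nonneg _) hε
  have h1 : ‖w j‖ ^ 2 ≤ ∑ p, ‖w p‖ ^ 2 := by
    apply Finset.single_le_sum (f := fun p => ‖w p‖^2) (fun p _ => sq_nonneg _) (mem_univ j)
  have h2 : ‖∑ p, w p‖ ^ 2 ≤ ε ^ 2 := by
    apply pow_le_pow_left₀ (norm_nonneg _) hε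
  have h3 : ‖w j‖ ^ 2 ≤ 2 * ε ^ 2 := by nlinarith
  have h4 : (Real.sqrt 2 * ε) ^ 2 = 2 * ε ^ 2 := by
    rw [mul_pow, Real.sq_sqrt (by norm_num : (0:ℝ) ≤ 2)]
  nlinarith [norm_nonneg (w j), Real.sqrt_nonneg 2, mul_nonneg (Real.sqrt_nonneg 2) hε0]
end
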